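/- Given norms p₀, p₁ on ℝ^d and 0 < t < 1, the double dual of the geometric mean p_t(v) = p₀(v)^{1−t} p₁(v)^t is equivalent, with constants depending only on d, to the dual of the geometric mean of the dual norms: p_t**(v) ≈ (p₀*(·)^{1−t} p₁*(·)^t)*(v) for all v ∈ ℝ^d. -/

import Mathlib

open scoped RealInnerProductSpace

/-- A norm as a plain function on ℝ^d. -/
def IsNormFun {d : ℕ} (p : EuclideanSpace ℝ (Fin d) → ℝ) : Prop :=
  (∀ u v, p (u + v) ≤ p u + p v) ∧ (∀ (a : ℝ) v, p (a • v) = |a| * p v) ∧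
    (∀ v, p v = 0 → v = 0)

/-- The dual functional `q*(v) = sup_{w ≠ 0} |⟨v,w⟩| / q(w)`. -/
noncomputable def dualFn {d : ℕ} (q : EuclideanSpace ℝ (Fin d) → ℝ)
    (v : EuclideanSpace ℝ (Fin d)) : ℝ :=
  ⨆ w : {w : EuclideanSpace ℝ (Fin d) // w ≠ 0}, |⟪v, (w : EuclideanSpace ℝ (Fin d))⟫| / q w

/-!
Write `P = p₀^{1-t} p₁^t` and `Q = (p₀*)^{1-t} (p₁*)^t`. Hölder's inequality for the two pairings
`|⟪w, x⟫| ≤ pⱼ*(w) pⱼ(x)` gives `|⟪w, x⟫| ≤ Q(w) P(x)`, i.e. `P* ≤ Q`, and dualising once more gives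
`Q* ≤ P**` with constant one.

For the converse, Auerbach's lemma puts each `pⱼ` within a factor `√d` of a Euclidean norm
`‖Tⱼ ·‖`. Diagonalising these two Euclidean norms simultaneously yields a basis `uᵢ` with dual
family `wᵢ` such that `pⱼ(uᵢ) pⱼ*(wᵢ) ≤ d` for both `j`, hence `P(uᵢ) Q(wᵢ) ≤ d`. Expanding
`v = ∑ ⟪v, wᵢ⟫ uᵢ` and pairing with `x` gives
`|⟪v, x⟫| ≤ ∑ Q*(v) Q(wᵢ) P(uᵢ) P*(x) ≤ d² Q*(v) P*(x)`, that is `P**(v) ≤ d² Q*(v)`.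
-/

section GeometricMean

variable {t a b a' b' x K : ℝ}

lemma rpow_one_sub_mul_rpow_self (t : ℝ) (hx : 0 ≤ x) : x ^ (1 - t) * x ^ t = x := by
  rw [← Real.rpow_add' hx (by norm_num), sub_add_cancel, Real.rpow_one]

lemma rpow_one_sub_mul_rpow_le_rpow_one_sub_mul_rpow (ht₀ : 0 ≤ t) (ht₁ : t ≤ 1) (ha : 0 ≤ a)
    (hb : 0 ≤ b) (haa' : a ≤ a') (hbb' : b ≤ b') :
    a ^ (1 - t) * b ^ t ≤ a' ^ (1 - t) * b' ^ t :=
  mul_le_mul (Real.rpow_le_rpow ha haa' (by linarith)) (Real.rpow_le_rpow hb hbb' ht₀)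
    (by positivity) (Real.rpow_nonneg (ha.trans haa') _)

lemma le_rpow_one_sub_mul_rpow (ht₀ : 0 ≤ t) (ht₁ : t ≤ 1) (hx : 0 ≤ x) (ha : x ≤ a)
    (hb : x ≤ b) : x ≤ a ^ (1 - t) * b ^ t :=
  calc x = x ^ (1 - t) * x ^ t := (rpow_one_sub_mul_rpow_self t hx).symm
    _ ≤ a ^ (1 - t) * b ^ t := rpow_one_sub_mul_rpow_le_rpow_one_sub_mul_rpow ht₀ ht₁ hx hx ha hb

lemma rpow_one_sub_mul_rpow_le (ht₀ : 0 ≤ t) (ht₁ : t ≤ 1) (ha : 0 ≤ a) (hb : 0 ≤ b)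
    (haK : a ≤ K) (hbK : b ≤ K) : a ^ (1 - t) * b ^ t ≤ K :=
  calc a ^ (1 - t) * b ^ t ≤ K ^ (1 - t) * K ^ t :=
        rpow_one_sub_mul_rpow_le_rpow_one_sub_mul_rpow ht₀ ht₁ ha hb haK hbK
    _ = K := rpow_one_sub_mul_rpow_self t (ha.trans haK)

lemma mul_rpow_one_sub_mul_mul_rpow (ha : 0 ≤ a) (hb : 0 ≤ b) (ha' : 0 ≤ a') (hb' : 0 ≤ b') :
    (a * a') ^ (1 - t) * (b * b') ^ t = a ^ (1 - t) * b ^ t * (a' ^ (1 - t) * b' ^ t) := by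
  rw [Real.mul_rpow ha ha', Real.mul_rpow hb hb']
  ring

end GeometricMean

section Dual

variable {d : ℕ}

local notation "E" => EuclideanSpace ℝ (Fin d)

def DominatesNorm (q : E → ℝ) : Prop := ∃ c, 0 < c ∧ ∀ w, c * ‖w‖ ≤ q w

variable {q q' : EuclideanSpace ℝ (Fin d) → ℝ} {v : EuclideanSpace ℝ (Fin d)} {M : ℝ}

lemma dualFn_nonneg (hq : ∀ w, 0 ≤ q w) (v : E) : 0 ≤ dualFn q v :=
  Real.iSup_nonneg fun w => div_nonneg (abs_nonneg _) (hq w)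

lemma dualFn_le (hM : 0 ≤ M) (h : ∀ w, w ≠ 0 → |⟪v, w⟫| ≤ M * q w) : dualFn q v ≤ M := by
  refine Real.iSup_le (fun ⟨w, hw⟩ => ?_) hM
  rcases lt_or_ge 0 (q w) with hqw | hqw
  · exact (div_le_iff₀ hqw).2 (h w hw)
  · exact (div_nonpos_of_nonneg_of_nonpos (abs_nonneg _) hqw).trans hM

lemma mul_dualFn_le {a K : ℝ} (ha : 0 ≤ a) (hK : 0 ≤ K)
    (h : ∀ w, a * |⟪v, w⟫| ≤ K * q w) : a * dualFn q v ≤ K := by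
  rcases ha.eq_or_lt with rfl | ha
  · simpa using hK
  rw [← le_div_iff₀' ha]
  refine dualFn_le (by positivity) fun w _ => ?_
  rw [div_mul_eq_mul_div, le_div_iff₀' ha]
  exact h w

namespace DominatesNorm

lemma nonneg (hq : DominatesNorm q) (w : E) : 0 ≤ q w := by
  obtain ⟨c, hc, hcq⟩ := hq
  exact (by positivity : 0 ≤ c * ‖w‖).trans (hcq w)

lemma pos (hq : DominatesNorm q) {w : E} (hw : w ≠ 0) : 0 < q w := by
  obtain ⟨c, hc, hcq⟩ := hq
  exact (by positivity : 0 < c * ‖w‖).trans_le (hcq w)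

lemma mono (hq : DominatesNorm q) (h : ∀ w, q w ≤ q' w) : DominatesNorm q' := by
  obtain ⟨c, hc, hcq⟩ := hq
  exact ⟨c, hc, fun w => (hcq w).trans (h w)⟩

lemma bddAbove_range (hq : DominatesNorm q) (v : E) :
    BddAbove (Set.range fun w : {w : E // w ≠ 0} => |⟪v, (w : E)⟫| / q w) := by
  obtain ⟨c, hc, hcq⟩ := id hq
  refine ⟨‖v‖ / c, Set.forall_mem_range.2 fun w => ?_⟩
  rw [div_le_div_iff₀ (hq.pos w.2) hc]
  calc |⟪v, (w : E)⟫| * c ≤ ‖v‖ * ‖(w : E)‖ * c := by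
        gcongr; exact abs_real_inner_le_norm _ _
    _ ≤ ‖v‖ * q w := by rw [mul_assoc]; gcongr; linarith [hcq w]

lemma abs_inner_le_dualFn_mul (hq : DominatesNorm q) (v w : E) :
    |⟪v, w⟫| ≤ dualFn q v * q w := by
  rcases eq_or_ne w 0 with rfl | hw
  · simpa using mul_nonneg (dualFn_nonneg hq.nonneg v) (hq.nonneg 0)
  rw [← div_le_iff₀ (hq.pos hw)]
  exact le_ciSup (hq.bddAbove_range v) ⟨w, hw⟩

lemma dualFn_anti (hq : DominatesNorm q) (h : ∀ w, q w ≤ q' w) (v : E) :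
    dualFn q' v ≤ dualFn q v :=
  dualFn_le (dualFn_nonneg hq.nonneg v) fun w _ =>
    (hq.abs_inner_le_dualFn_mul v w).trans
      (mul_le_mul_of_nonneg_left (h w) (dualFn_nonneg hq.nonneg v))

lemma dualFn_dominatesNorm (hq : DominatesNorm q) {C : ℝ} (hC : 0 < C)
    (hqC : ∀ w, q w ≤ C * ‖w‖) : DominatesNorm (dualFn q) := by
  refine ⟨C⁻¹, inv_pos.2 hC, fun w => ?_⟩
  rcases eq_or_ne w 0 with rfl | hw
  · simpa using dualFn_nonneg hq.nonneg 0
  have h := hq.abs_inner_le_dualFn_mul w w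
  rw [real_inner_self_eq_norm_sq, abs_of_nonneg (by positivity)] at h
  have hw' := norm_pos_iff.2 hw
  rw [inv_mul_le_iff₀ hC]
  nlinarith [hqC w, dualFn_nonneg hq.nonneg w]

end DominatesNorm

lemma dualFn_dualFn_le_of_sum_smul_eq {ι : Type*} [Fintype ι] {P Q : E → ℝ}
    (hP : DominatesNorm P) (hQ : DominatesNorm Q) {u w : ι → E}
    (huw : ∀ v, ∑ i, ⟪v, w i⟫ • u i = v) {K : ℝ} (hK : 0 ≤ K)
    (hPQ : ∀ i, P (u i) * Q (w i) ≤ K) (v : E) :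
    dualFn (dualFn P) v ≤ Fintype.card ι * K * dualFn Q v := by
  have hQv := dualFn_nonneg hQ.nonneg v
  refine dualFn_le (by positivity) fun x _ => ?_
  have hPx := dualFn_nonneg hP.nonneg x
  calc |⟪v, x⟫| = |∑ i, ⟪v, w i⟫ * ⟪u i, x⟫| := by
        conv_lhs => rw [← huw v]
        simp only [sum_inner, real_inner_smul_left]
    _ ≤ ∑ i, |⟪v, w i⟫| * |⟪x, u i⟫| := by
        simpa only [abs_mul, real_inner_comm x] using
          Finset.abs_sum_le_sum_abs (fun i => ⟪v, w i⟫ * ⟪u i, x⟫) Finset.univ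
    _ ≤ ∑ i, (dualFn Q v * Q (w i)) * (dualFn P x * P (u i)) :=
        Finset.sum_le_sum fun i _ => mul_le_mul (hQ.abs_inner_le_dualFn_mul v (w i))
          (hP.abs_inner_le_dualFn_mul x (u i)) (abs_nonneg _)
          (mul_nonneg hQv (hQ.nonneg _))
    _ = ∑ i, dualFn Q v * dualFn P x * (P (u i) * Q (w i)) :=
        Finset.sum_congr rfl fun i _ => by ring
    _ ≤ ∑ _i : ι, dualFn Q v * dualFn P x * K :=
        Finset.sum_le_sum fun i _ => by gcongr; exact hPQ i
    _ = Fintype.card ι * K * dualFn Q v * dualFn P x := by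
        rw [Finset.sum_const, Finset.card_univ, nsmul_eq_mul]; ring

end Dual

section GeometricMeanOfFunctions

variable {d : ℕ} {t : ℝ} {q₀ q₁ : EuclideanSpace ℝ (Fin d) → ℝ}

local notation "E" => EuclideanSpace ℝ (Fin d)

/-- The paper's `p_t`. -/
noncomputable def geomMean (t : ℝ) (q₀ q₁ : E → ℝ) : E → ℝ := fun w => q₀ w ^ (1 - t) * q₁ w ^ t

lemma geomMean_nonneg (h₀ : ∀ w, 0 ≤ q₀ w) (h₁ : ∀ w, 0 ≤ q₁ w) (w : E) :
    0 ≤ geomMean t q₀ q₁ w :=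
  mul_nonneg (Real.rpow_nonneg (h₀ w) _) (Real.rpow_nonneg (h₁ w) _)

lemma geomMean_mul_norm_le {c₀ c₁ : ℝ} (hc₀ : 0 ≤ c₀) (hc₁ : 0 ≤ c₁) (ht₀ : 0 ≤ t) (ht₁ : t ≤ 1)
    (h₀ : ∀ w, c₀ * ‖w‖ ≤ q₀ w) (h₁ : ∀ w, c₁ * ‖w‖ ≤ q₁ w) (w : E) :
    c₀ ^ (1 - t) * c₁ ^ t * ‖w‖ ≤ geomMean t q₀ q₁ w :=
  calc c₀ ^ (1 - t) * c₁ ^ t * ‖w‖ = (c₀ * ‖w‖) ^ (1 - t) * (c₁ * ‖w‖) ^ t := by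
        rw [mul_rpow_one_sub_mul_mul_rpow hc₀ hc₁ (norm_nonneg w) (norm_nonneg w),
          rpow_one_sub_mul_rpow_self t (norm_nonneg w)]
    _ ≤ geomMean t q₀ q₁ w := rpow_one_sub_mul_rpow_le_rpow_one_sub_mul_rpow ht₀ ht₁
        (by positivity) (by positivity) (h₀ w) (h₁ w)

lemma geomMean_le_mul_norm {C₀ C₁ : ℝ} (h₀ : ∀ w, 0 ≤ q₀ w) (h₁ : ∀ w, 0 ≤ q₁ w)
    (hC₀ : 0 ≤ C₀) (hC₁ : 0 ≤ C₁) (ht₀ : 0 ≤ t) (ht₁ : t ≤ 1) (hq₀ : ∀ w, q₀ w ≤ C₀ * ‖w‖)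
    (hq₁ : ∀ w, q₁ w ≤ C₁ * ‖w‖) (w : E) : geomMean t q₀ q₁ w ≤ C₀ ^ (1 - t) * C₁ ^ t * ‖w‖ :=
  calc geomMean t q₀ q₁ w ≤ (C₀ * ‖w‖) ^ (1 - t) * (C₁ * ‖w‖) ^ t :=
        rpow_one_sub_mul_rpow_le_rpow_one_sub_mul_rpow ht₀ ht₁ (h₀ w) (h₁ w) (hq₀ w) (hq₁ w)
    _ = C₀ ^ (1 - t) * C₁ ^ t * ‖w‖ := by
        rw [mul_rpow_one_sub_mul_mul_rpow hC₀ hC₁ (norm_nonneg w) (norm_nonneg w),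
          rpow_one_sub_mul_rpow_self t (norm_nonneg w)]

lemma DominatesNorm.geomMean (h₀ : DominatesNorm q₀) (h₁ : DominatesNorm q₁) (ht₀ : 0 ≤ t)
    (ht₁ : t ≤ 1) : DominatesNorm (geomMean t q₀ q₁) := by
  obtain ⟨c₀, hc₀, hq₀⟩ := h₀
  obtain ⟨c₁, hc₁, hq₁⟩ := h₁
  exact ⟨_, by positivity, geomMean_mul_norm_le hc₀.le hc₁.le ht₀ ht₁ hq₀ hq₁⟩

lemma dualFn_geomMean_le (h₀ : DominatesNorm q₀) (h₁ : DominatesNorm q₁)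
    (ht₀ : 0 ≤ t) (ht₁ : t ≤ 1) (w : E) :
    dualFn (geomMean t q₀ q₁) w ≤ geomMean t (dualFn q₀) (dualFn q₁) w := by
  have hq₀w := dualFn_nonneg h₀.nonneg w
  have hq₁w := dualFn_nonneg h₁.nonneg w
  refine dualFn_le (geomMean_nonneg (dualFn_nonneg h₀.nonneg) (dualFn_nonneg h₁.nonneg) w)
    fun x _ => ?_
  calc |⟪w, x⟫| ≤ (dualFn q₀ w * q₀ x) ^ (1 - t) * (dualFn q₁ w * q₁ x) ^ t :=
        le_rpow_one_sub_mul_rpow ht₀ ht₁ (abs_nonneg _) (h₀.abs_inner_le_dualFn_mul w x)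
          (h₁.abs_inner_le_dualFn_mul w x)
    _ = geomMean t (dualFn q₀) (dualFn q₁) w * geomMean t q₀ q₁ x :=
        mul_rpow_one_sub_mul_mul_rpow hq₀w hq₁w (h₀.nonneg x) (h₁.nonneg x)

lemma geomMean_mul_geomMean_le {r₀ r₁ : E → ℝ} (hq₀ : ∀ w, 0 ≤ q₀ w) (hq₁ : ∀ w, 0 ≤ q₁ w)
    (hr₀ : ∀ w, 0 ≤ r₀ w) (hr₁ : ∀ w, 0 ≤ r₁ w) (ht₀ : 0 ≤ t) (ht₁ : t ≤ 1) {u w : E} {K : ℝ}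
    (h₀ : q₀ u * r₀ w ≤ K) (h₁ : q₁ u * r₁ w ≤ K) :
    geomMean t q₀ q₁ u * geomMean t r₀ r₁ w ≤ K := by
  rw [geomMean, geomMean, ← mul_rpow_one_sub_mul_mul_rpow (hq₀ u) (hq₁ u) (hr₀ w) (hr₁ w)]
  exact rpow_one_sub_mul_rpow_le ht₀ ht₁ (mul_nonneg (hq₀ u) (hr₀ w))
    (mul_nonneg (hq₁ u) (hr₁ w)) h₀ h₁

end GeometricMeanOfFunctions

lemma sum_abs_le_sqrt_card_mul_norm {ι : Type*} [Fintype ι] (x : EuclideanSpace ℝ ι) :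
    ∑ i, |x i| ≤ √(Fintype.card ι) * ‖x‖ := by
  rw [EuclideanSpace.norm_eq, mul_comm]
  simpa only [Real.norm_eq_abs, sq_abs, mul_one, one_pow, Finset.sum_const, Finset.card_univ,
    nsmul_eq_mul] using Real.sum_mul_le_sqrt_mul_sqrt Finset.univ (fun i => |x i|) fun _ => 1

lemma norm_le_sqrt_card_mul_of_abs_le {ι : Type*} [Fintype ι] {x : EuclideanSpace ℝ ι} {M : ℝ}
    (hM : 0 ≤ M) (hx : ∀ i, |x i| ≤ M) : ‖x‖ ≤ √(Fintype.card ι) * M := by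
  rw [EuclideanSpace.norm_eq, ← Real.sqrt_sq hM, ← Real.sqrt_mul (Nat.cast_nonneg _)]
  gcongr
  calc ∑ i, ‖x i‖ ^ 2 ≤ ∑ _i : ι, M ^ 2 := by
        gcongr with i
        rw [Real.norm_eq_abs]
        exact hx i
    _ = Fintype.card ι * M ^ 2 := by rw [Finset.sum_const, Finset.card_univ, nsmul_eq_mul]

section Gram

variable {F G : Type*} [NormedAddCommGroup F] [InnerProductSpace ℝ F] [FiniteDimensional ℝ F]
  [NormedAddCommGroup G] [InnerProductSpace ℝ G] [FiniteDimensional ℝ G]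

lemma norm_apply_mul_abs_inner_le_of_adjoint_apply_eq (S : F →ₗ[ℝ] G) {b : F} {μ : ℝ}
    (hb : ‖b‖ = 1) (hμ : S.adjoint (S b) = μ • b) (y : F) : ‖S b‖ * |⟪b, y⟫| ≤ ‖S y‖ := by
  have hSb : ‖S b‖ ^ 2 = μ := by
    rw [← real_inner_self_eq_norm_sq, ← LinearMap.adjoint_inner_left, hμ, real_inner_smul_left,
      real_inner_self_eq_norm_sq, hb, one_pow, mul_one]
  have hSy : ⟪S b, S y⟫ = ‖S b‖ ^ 2 * ⟪b, y⟫ := by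
    rw [← LinearMap.adjoint_inner_left, hμ, real_inner_smul_left, hSb]
  rcases (norm_nonneg (S b)).eq_or_lt with h | h
  · rw [← h, zero_mul]; exact norm_nonneg _
  refine le_of_mul_le_mul_left ?_ h
  calc ‖S b‖ * (‖S b‖ * |⟪b, y⟫|) = |⟪S b, S y⟫| := by
        rw [hSy, abs_mul, abs_of_nonneg (sq_nonneg ‖S b‖)]; ring
    _ ≤ ‖S b‖ * ‖S y‖ := abs_real_inner_le_norm _ _

/-- An orthonormal eigenbasis of `S†S` for `S = T₁ T₀⁻¹`, pulled back by `T₀`, is orthogonal for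
both quadratic forms `‖T₀ ·‖²` and `‖T₁ ·‖²`. -/
theorem exists_sum_smul_eq_norm_mul_abs_inner_le (T₀ : F ≃ₗ[ℝ] F) (T₁ : F →ₗ[ℝ] G) {n : ℕ}
    (hn : Module.finrank ℝ F = n) :
    ∃ u w : Fin n → F, (∀ v, ∑ i, ⟪v, w i⟫ • u i = v) ∧
      ∀ i x, ‖T₀ (u i)‖ * |⟪w i, x⟫| ≤ ‖T₀ x‖ ∧ ‖T₁ (u i)‖ * |⟪w i, x⟫| ≤ ‖T₁ x‖ := by
  set S : F →ₗ[ℝ] G := T₁ ∘ₗ T₀.symm.toLinearMap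
  set hS := S.isSymmetric_adjoint_comp_self
  set b := hS.eigenvectorBasis hn
  have hw : ∀ i x, ⟪T₀.toLinearMap.adjoint (b i), x⟫ = ⟪b i, T₀ x⟫ := fun i x =>
    LinearMap.adjoint_inner_left _ _ _
  refine ⟨fun i => T₀.symm (b i), fun i => T₀.toLinearMap.adjoint (b i), fun v => ?_,
    fun i x => ⟨?_, ?_⟩⟩
  · simp_rw [real_inner_comm _ v, hw, ← map_smul, ← map_sum, b.sum_repr', T₀.symm_apply_apply]
  · rw [T₀.apply_symm_apply, b.orthonormal.1 i, one_mul, hw]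
    simpa using abs_real_inner_le_norm (b i) (T₀ x)
  · have h := norm_apply_mul_abs_inner_le_of_adjoint_apply_eq S (b.orthonormal.1 i)
      (hS.apply_eigenvectorBasis hn i) (T₀ x)
    simpa [S, hw] using h

end Gram

namespace IsNormFun

variable {d : ℕ} {p p₀ p₁ : EuclideanSpace ℝ (Fin d) → ℝ}

local notation "E" => EuclideanSpace ℝ (Fin d)

lemma map_zero (hp : IsNormFun p) : p 0 = 0 := by
  simpa using hp.2.1 0 0

lemma nonneg (hp : IsNormFun p) (v : E) : 0 ≤ p v := by
  have h := hp.1 v (-v)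
  have hneg : p (-v) = p v := by simpa using hp.2.1 (-1) v
  rw [add_neg_cancel, hp.map_zero, hneg] at h
  linarith

lemma pos (hp : IsNormFun p) {v : E} (hv : v ≠ 0) : 0 < p v :=
  (hp.nonneg v).lt_of_ne fun h => hv (hp.2.2 v h.symm)

lemma map_sum_le (hp : IsNormFun p) {ι : Type*} (s : Finset ι) (f : ι → E) :
    p (∑ i ∈ s, f i) ≤ ∑ i ∈ s, p (f i) :=
  Finset.le_sum_of_subadditive p hp.map_zero.le hp.1 s f

lemma map_smul_inv_self (hp : IsNormFun p) {v : E} (hv : v ≠ 0) : p ((p v)⁻¹ • v) = 1 := by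
  rw [hp.2.1, abs_of_pos (inv_pos.2 (hp.pos hv)), inv_mul_cancel₀ (hp.pos hv).ne']

lemma exists_le_mul_norm (hp : IsNormFun p) : ∃ C, 0 < C ∧ ∀ v, p v ≤ C * ‖v‖ := by
  set b := EuclideanSpace.basisFun (Fin d) ℝ
  have hb : 0 ≤ ∑ i, p (b i) := Finset.sum_nonneg fun i _ => hp.nonneg _
  refine ⟨∑ i, p (b i) + 1, by linarith, fun v => ?_⟩
  calc p v = p (∑ i, ⟪b i, v⟫ • b i) := by rw [b.sum_repr']
    _ ≤ ∑ i, |⟪b i, v⟫| * p (b i) := by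
        simpa only [hp.2.1] using hp.map_sum_le Finset.univ fun i => ⟪b i, v⟫ • b i
    _ ≤ ∑ i, ‖v‖ * p (b i) := by
        gcongr with i
        · exact hp.nonneg _
        · simpa [b.orthonormal.1 i] using abs_real_inner_le_norm (b i) v
    _ ≤ (∑ i, p (b i) + 1) * ‖v‖ := by
        rw [← Finset.mul_sum]; nlinarith [norm_nonneg v]

lemma continuous (hp : IsNormFun p) : Continuous p := by
  obtain ⟨C, -, hC⟩ := hp.exists_le_mul_norm
  refine (LipschitzWith.of_le_add_mul' C fun x y => ?_).continuous
  calc p x = p (y + (x - y)) := by rw [add_sub_cancel]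
    _ ≤ p y + C * dist x y := by rw [dist_eq_norm]; linarith [hp.1 y (x - y), hC (x - y)]

lemma dominatesNorm (hp : IsNormFun p) : DominatesNorm p := by
  obtain ⟨c, hc, hcp⟩ := (isCompact_sphere (0 : E) 1).exists_forall_le'
    hp.continuous.continuousOn (a := 0) fun v hv => hp.pos (ne_zero_of_mem_unit_sphere ⟨v, hv⟩)
  refine ⟨c, hc, fun v => ?_⟩
  rcases eq_or_ne v 0 with rfl | hv
  · simp [hp.map_zero]
  have hv' := norm_pos_iff.2 hv
  have h := hcp (‖v‖⁻¹ • v) (by simp [norm_smul, hv'.ne'])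
  rwa [hp.2.1, abs_of_pos (inv_pos.2 hv'), le_inv_mul_iff₀ hv', mul_comm] at h

lemma isCompact_setOf_le_one (hp : IsNormFun p) : IsCompact {v : E | p v ≤ 1} := by
  obtain ⟨c, hc, hcp⟩ := hp.dominatesNorm
  refine Metric.isCompact_of_isClosed_isBounded (isClosed_le hp.continuous continuous_const)
    ((Metric.isBounded_closedBall (x := 0) (r := 1 / c)).subset fun v hv => ?_)
  rw [mem_closedBall_zero_iff, le_div_iff₀' hc]
  exact (hcp v).trans hv

lemma abs_le_of_forall_le_one (hp : IsNormFun p) (f : E →ₗ[ℝ] ℝ)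
    (hf : ∀ v, p v ≤ 1 → |f v| ≤ 1) (v : E) : |f v| ≤ p v := by
  rcases eq_or_ne v 0 with rfl | hv
  · simp [hp.map_zero]
  have hpv := hp.pos hv
  have h := hf _ (hp.map_smul_inv_self hv).le
  rwa [map_smul, smul_eq_mul, abs_mul, abs_of_pos (inv_pos.2 hpv), inv_mul_le_iff₀ hpv,
    mul_one] at h

theorem exists_auerbach_basis (hp : IsNormFun p) :
    ∃ B : Module.Basis (Fin d) ℝ E, (∀ i, p (B i) ≤ 1) ∧ ∀ i v, |B.coord i v| ≤ p v := by
  set e := (EuclideanSpace.basisFun (Fin d) ℝ).toBasis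
  set S : Set (Fin d → E) := Set.univ.pi fun _ => {v | p v ≤ 1}
  have hdet : Continuous fun f : Fin d → E => |e.det f| := by
    simp only [e.det_apply]
    exact (continuous_matrix fun i j =>
      (e.coord i).continuous_of_finiteDimensional.comp (continuous_apply j)).matrix_det.abs
  have he : ∀ i, e i ≠ 0 := e.ne_zero
  have hscaled : (fun i => (p (e i))⁻¹ • e i) ∈ S := fun i _ => (hp.map_smul_inv_self (he i)).le
  obtain ⟨v, hvS, hvmax⟩ := (isCompact_univ_pi fun _ => hp.isCompact_setOf_le_one).exists_isMaxOn
    ⟨_, hscaled⟩ hdet.continuousOn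
  have hv : e.det v ≠ 0 := by
    have h : 0 < |e.det fun i => (p (e i))⁻¹ • e i| := by
      rw [AlternatingMap.map_smul_univ, e.det_self, smul_eq_mul, mul_one]
      exact abs_pos.2 (Finset.prod_ne_zero_iff.2 fun i _ => inv_ne_zero (hp.pos (he i)).ne')
    exact abs_pos.1 (h.trans_le (hvmax hscaled))
  obtain ⟨hli, hsp⟩ := e.is_basis_iff_det.2 (isUnit_iff_ne_zero.2 hv)
  refine ⟨Module.Basis.mk hli hsp.ge, fun i => by simpa using hvS i trivial,
    fun i => hp.abs_le_of_forall_le_one _ fun x hx => ?_⟩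
  -- Cramer's rule: the `i`-th coordinate of `x` is `det (v with vᵢ replaced by x) / det v`.
  have hcramer := congr($(e.det_smul_mk_coord_eq_det_update hli hsp.ge i) x)
  simp only [LinearMap.smul_apply, smul_eq_mul, MultilinearMap.toLinearMap_apply,
    AlternatingMap.coe_multilinearMap] at hcramer
  have hupdate : Function.update v i x ∈ S := by
    intro j _
    rcases eq_or_ne j i with rfl | hj
    · simpa using hx
    · simpa [hj] using hvS j trivial
  have h : |e.det (Function.update v i x)| ≤ |e.det v| := hvmax hupdate
  rw [← hcramer, abs_mul] at h
  exact (mul_le_iff_le_one_right (abs_pos.2 hv)).1 h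

theorem exists_linearEquiv_sqrt_dim_approx (hp : IsNormFun p) :
    ∃ T : E ≃ₗ[ℝ] E, ∀ v, p v ≤ √d * ‖T v‖ ∧ ‖T v‖ ≤ √d * p v := by
  obtain ⟨B, hB, hcoord⟩ := hp.exists_auerbach_basis
  set T : E ≃ₗ[ℝ] E := B.equivFun.trans (WithLp.linearEquiv 2 ℝ (Fin d → ℝ)).symm
  have hT : ∀ v i, T v i = B.coord i v := fun v i => rfl
  refine ⟨T, fun v => ⟨?_, ?_⟩⟩
  · calc p v = p (∑ i, B.coord i v • B i) := (congrArg p (B.sum_repr v)).symm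
      _ ≤ ∑ i, |T v i| * p (B i) := by
          simpa only [hp.2.1, hT] using hp.map_sum_le Finset.univ fun i => B.coord i v • B i
      _ ≤ ∑ i, |T v i| := by
          gcongr with i
          exact mul_le_of_le_one_right (abs_nonneg _) (hB i)
      _ ≤ √d * ‖T v‖ := by simpa using sum_abs_le_sqrt_card_mul_norm (T v)
  · have h := norm_le_sqrt_card_mul_of_abs_le (hp.nonneg v) fun i => (hT v i).symm ▸ hcoord i v
    rwa [Fintype.card_fin] at h

lemma mul_dualFn_le_of_sqrt_dim_approx (hp : IsNormFun p) {T : E ≃ₗ[ℝ] E}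
    (hT : ∀ v, p v ≤ √d * ‖T v‖ ∧ ‖T v‖ ≤ √d * p v) {u w : E}
    (huw : ∀ x, ‖T u‖ * |⟪w, x⟫| ≤ ‖T x‖) : p u * dualFn p w ≤ d := by
  refine mul_dualFn_le (hp.nonneg u) (Nat.cast_nonneg d) fun x => ?_
  calc p u * |⟪w, x⟫| ≤ √d * ‖T u‖ * |⟪w, x⟫| := by gcongr; exact (hT u).1
    _ ≤ √d * ‖T x‖ := by rw [mul_assoc]; gcongr; exact huw x
    _ ≤ √d * (√d * p x) := by gcongr; exact (hT x).2
    _ = d * p x := by rw [← mul_assoc, Real.mul_self_sqrt (Nat.cast_nonneg d)]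

lemma dominatesNorm_dualFn_geomMean (hp₀ : IsNormFun p₀) (hp₁ : IsNormFun p₁) {t : ℝ}
    (ht₀ : 0 ≤ t) (ht₁ : t ≤ 1) : DominatesNorm (dualFn (geomMean t p₀ p₁)) := by
  obtain ⟨C₀, hC₀, hp₀C⟩ := hp₀.exists_le_mul_norm
  obtain ⟨C₁, hC₁, hp₁C⟩ := hp₁.exists_le_mul_norm
  exact (hp₀.dominatesNorm.geomMean hp₁.dominatesNorm ht₀ ht₁).dualFn_dominatesNorm
    (by positivity) (geomMean_le_mul_norm hp₀.nonneg hp₁.nonneg hC₀.le hC₁.le ht₀ ht₁ hp₀C hp₁C)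

end IsNormFun

section

variable {d : ℕ} {t : ℝ} {p₀ p₁ : EuclideanSpace ℝ (Fin d) → ℝ}

theorem exists_sum_smul_eq_mul_dualFn_le (hp₀ : IsNormFun p₀) (hp₁ : IsNormFun p₁) :
    ∃ u w : Fin d → EuclideanSpace ℝ (Fin d), (∀ v, ∑ i, ⟪v, w i⟫ • u i = v) ∧
      ∀ i, p₀ (u i) * dualFn p₀ (w i) ≤ d ∧ p₁ (u i) * dualFn p₁ (w i) ≤ d := by
  obtain ⟨T₀, hT₀⟩ := hp₀.exists_linearEquiv_sqrt_dim_approx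
  obtain ⟨T₁, hT₁⟩ := hp₁.exists_linearEquiv_sqrt_dim_approx
  obtain ⟨u, w, huw, hT⟩ :=
    exists_sum_smul_eq_norm_mul_abs_inner_le T₀ T₁.toLinearMap finrank_euclideanSpace_fin
  exact ⟨u, w, huw, fun i => ⟨hp₀.mul_dualFn_le_of_sqrt_dim_approx hT₀ fun x => (hT i x).1,
    hp₁.mul_dualFn_le_of_sqrt_dim_approx hT₁ fun x => (hT i x).2⟩⟩

theorem dualFn_geomMean_dualFn_le_dualFn_dualFn (hp₀ : IsNormFun p₀) (hp₁ : IsNormFun p₁)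
    (ht₀ : 0 ≤ t) (ht₁ : t ≤ 1) (v : EuclideanSpace ℝ (Fin d)) :
    dualFn (geomMean t (dualFn p₀) (dualFn p₁)) v ≤ dualFn (dualFn (geomMean t p₀ p₁)) v :=
  (hp₀.dominatesNorm_dualFn_geomMean hp₁ ht₀ ht₁).dualFn_anti
    (dualFn_geomMean_le hp₀.dominatesNorm hp₁.dominatesNorm ht₀ ht₁) v

theorem dualFn_dualFn_geomMean_le (hp₀ : IsNormFun p₀) (hp₁ : IsNormFun p₁) (ht₀ : 0 ≤ t)
    (ht₁ : t ≤ 1) (v : EuclideanSpace ℝ (Fin d)) :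
    dualFn (dualFn (geomMean t p₀ p₁)) v ≤
      d ^ 2 * dualFn (geomMean t (dualFn p₀) (dualFn p₁)) v := by
  have hQ := (hp₀.dominatesNorm_dualFn_geomMean hp₁ ht₀ ht₁).mono
    (dualFn_geomMean_le hp₀.dominatesNorm hp₁.dominatesNorm ht₀ ht₁)
  obtain ⟨u, w, huw, hK⟩ := exists_sum_smul_eq_mul_dualFn_le hp₀ hp₁
  have h := dualFn_dualFn_le_of_sum_smul_eq (hp₀.dominatesNorm.geomMean hp₁.dominatesNorm ht₀ ht₁)
    hQ huw (Nat.cast_nonneg d) (fun i => geomMean_mul_geomMean_le hp₀.nonneg hp₁.nonneg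
      (dualFn_nonneg hp₀.nonneg) (dualFn_nonneg hp₁.nonneg) ht₀ ht₁ (hK i).1 (hK i).2) v
  rwa [Fintype.card_fin, ← sq] at h

end

/-- For norms `p₀, p₁` on ℝ^d and `0 < t < 1`, the double dual of the geometric mean
`p_t = p₀^{1-t} p₁^t` is equivalent, with constants depending only on `d`, to the dual
of the geometric mean of the dual norms. -/
theorem double_dual_geometric_mean_equiv (d : ℕ) :
    ∃ c C : ℝ, 0 < c ∧ 0 < C ∧
      ∀ (p₀ p₁ : EuclideanSpace ℝ (Fin d) → ℝ), IsNormFun p₀ → IsNormFun p₁ →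
        ∀ t : ℝ, 0 < t → t < 1 → ∀ v,
          c * dualFn (fun w => dualFn p₀ w ^ (1 - t) * dualFn p₁ w ^ t) v ≤
            dualFn (dualFn (fun w => p₀ w ^ (1 - t) * p₁ w ^ t)) v ∧
          dualFn (dualFn (fun w => p₀ w ^ (1 - t) * p₁ w ^ t)) v ≤
            C * dualFn (fun w => dualFn p₀ w ^ (1 - t) * dualFn p₁ w ^ t) v := by
  -- `d ^ 2` alone would vanish for `d = 0`.
  refine ⟨1, d ^ 2 + 1, one_pos, by positivity, fun p₀ p₁ hp₀ hp₁ t ht₀ ht₁ v => ⟨?_, ?_⟩⟩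
  · rw [one_mul]
    exact dualFn_geomMean_dualFn_le_dualFn_dualFn hp₀ hp₁ ht₀.le ht₁.le v
  · have hQv : 0 ≤ dualFn (geomMean t (dualFn p₀) (dualFn p₁)) v :=
      dualFn_nonneg (geomMean_nonneg (dualFn_nonneg hp₀.nonneg) (dualFn_nonneg hp₁.nonneg)) v
    calc _ ≤ d ^ 2 * dualFn (geomMean t (dualFn p₀) (dualFn p₁)) v :=
          dualFn_dualFn_geomMean_le hp₀ hp₁ ht₀.le ht₁.le v
      _ ≤ (d ^ 2 + 1) * dualFn (geomMean t (dualFn p₀) (dualFn p₁)) v := by nlinarith
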